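/- Let a > 0, d ≥ 3, σ ∈ ℝ, and P_0, …, P_d real n×n matrices; set P(σ) = Σ_{ℓ=0}^{d} P_ℓ τ_ℓ(σ). Let Π be the dn×dn block permutation matrix that cyclically moves the first block column to the last position. Let L_σ be the block lower triangular dn×dn matrix with identity diagonal blocks except that its last diagonal block is P(σ), with subdiagonal structure: block entries −(2σ/a)I on the first subdiagonal (in block rows 2 through d−1), I on the second subdiagonal (in block rows 3 through d−1), and last block row [P_1, …, P_{d−3}, (−P_d + P_{d−2}), (P_{d−1} + (2σ/a)P_d), P(σ)]. Let U_σ be the block upper triangular dn×dn matrix with identity diagonal blocks whose only other nonzero blocks are −τ_ℓ(σ)I in block row ℓ of the last block column, for ℓ = 1, …, d−1. Then L_σ U_σ = (K − σM)Π, where K − σM is the companion linearization matrix whose block rows encode u_1 − (σ/a)u_0 = 0, u_{ℓ−1} − (2σ/a)u_ℓ + u_{ℓ+1} = 0 for ℓ = 1, …, d−2, and Σ_{ℓ=0}^{d−3} P_ℓ u_ℓ + (−P_d + P_{d−2})u_{d−2} + (P_{d−1} + (2σ/a)P_d)u_{d−1} on the last block row. -/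
import Mathlib


open Matrix

/-- Chebyshev polynomials on the interval `[-a, a]`:
`τ₀(σ) = 1`, `τ₁(σ) = σ/a`, `τ_{ℓ+1}(σ) = (2σ/a) τ_ℓ(σ) − τ_{ℓ−1}(σ)`. -/
noncomputable def chebOn (a σ : ℝ) : ℕ → ℝ
  | 0 => 1
  | 1 => σ / a
  | (ℓ + 2) => 2 * (σ / a) * chebOn a σ (ℓ + 1) - chebOn a σ ℓ

/-- The `dn × dn` companion matrix `K − σM` of the Chebyshev companion linearization.
Block row `0` encodes `u₁ − (σ/a)u₀`; block row `i` for `1 ≤ i ≤ d−2` encodes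
`u_{i−1} − (2σ/a)u_i + u_{i+1}`; and the last block row is
`[P₀, …, P_{d−3}, (−P_d + P_{d−2}), (P_{d−1} + (2σ/a)P_d)]`. -/
noncomputable def companionKmuM (a σ : ℝ) (d n : ℕ)
    (P : ℕ → Matrix (Fin n) (Fin n) ℝ) :
    Matrix (Fin d × Fin n) (Fin d × Fin n) ℝ :=
  fun p q =>
    if (p.1 : ℕ) = d - 1 then
      (if (q.1 : ℕ) + 3 ≤ d then P (q.1 : ℕ) p.2 q.2
       else if (q.1 : ℕ) = d - 2 then (-(P d) + P (d - 2)) p.2 q.2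
       else (P (d - 1) + (2 * σ / a) • P d) p.2 q.2)
    else if (p.1 : ℕ) = 0 then
      (if (q.1 : ℕ) = 0 then -(σ / a) * (if p.2 = q.2 then 1 else 0)
       else if (q.1 : ℕ) = 1 then (if p.2 = q.2 then 1 else 0)
       else 0)
    else
      (if (q.1 : ℕ) + 1 = (p.1 : ℕ) then (if p.2 = q.2 then 1 else 0)
       else if (q.1 : ℕ) = (p.1 : ℕ) then -(2 * σ / a) * (if p.2 = q.2 then 1 else 0)
       else if (q.1 : ℕ) = (p.1 : ℕ) + 1 then (if p.2 = q.2 then 1 else 0)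
       else 0)

/-- The block lower triangular factor `L_σ`: identity diagonal blocks except the last one,
which is `P(σ)`; `−(2σ/a)I` on the first block subdiagonal and `I` on the second block
subdiagonal; last block row `[P₁, …, P_{d−3}, (−P_d + P_{d−2}), (P_{d−1} + (2σ/a)P_d), P(σ)]`. -/
noncomputable def lowerLsigma (a σ : ℝ) (d n : ℕ)
    (P : ℕ → Matrix (Fin n) (Fin n) ℝ) :
    Matrix (Fin d × Fin n) (Fin d × Fin n) ℝ :=
  fun p q =>
    if (p.1 : ℕ) = d - 1 then
      (if (q.1 : ℕ) + 4 ≤ d then P ((q.1 : ℕ) + 1) p.2 q.2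
       else if (q.1 : ℕ) = d - 3 then (-(P d) + P (d - 2)) p.2 q.2
       else if (q.1 : ℕ) = d - 2 then (P (d - 1) + (2 * σ / a) • P d) p.2 q.2
       else (∑ ℓ ∈ Finset.range (d + 1), chebOn a σ ℓ • P ℓ) p.2 q.2)
    else
      (if (q.1 : ℕ) = (p.1 : ℕ) then (if p.2 = q.2 then 1 else 0)
       else if (q.1 : ℕ) + 1 = (p.1 : ℕ) then -(2 * σ / a) * (if p.2 = q.2 then 1 else 0)
       else if (q.1 : ℕ) + 2 = (p.1 : ℕ) then (if p.2 = q.2 then 1 else 0)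
       else 0)

/-- The block upper triangular factor `U_σ`: identity diagonal blocks, and blocks
`−τ_ℓ(σ) I` in block row `ℓ` (1-indexed, `ℓ = 1, …, d−1`) of the last block column. -/
noncomputable def upperUsigma (a σ : ℝ) (d n : ℕ) :
    Matrix (Fin d × Fin n) (Fin d × Fin n) ℝ :=
  fun p q =>
    (if p.1 = q.1 ∧ p.2 = q.2 then 1 else 0) +
    (if (q.1 : ℕ) = d - 1 ∧ (p.1 : ℕ) < d - 1 ∧ p.2 = q.2
      then -(chebOn a σ ((p.1 : ℕ) + 1)) else 0)

/-- The block permutation matrix `Π` that cyclically moves the first block column to the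
last position: `(AΠ)` has block columns `[A₁, …, A_{d−1}, A₀]`. -/
def blockCyclicPerm (d n : ℕ) : Matrix (Fin d × Fin n) (Fin d × Fin n) ℝ :=
  fun p q =>
    if (q.1 : ℕ) = ((p.1 : ℕ) + (d - 1)) % d ∧ p.2 = q.2 then 1 else 0

lemma chebOn_add_two (a σ : ℝ) (ℓ : ℕ) :
    chebOn a σ (ℓ + 2) = 2 * (σ / a) * chebOn a σ (ℓ + 1) - chebOn a σ ℓ := rfl

lemma cheb_sum_identity (a σ : ℝ) (e : ℕ) (f : ℕ → ℝ) :
    (∑ ℓ ∈ Finset.range (e + 3 + 1), chebOn a σ ℓ * f ℓ)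
      + ((∑ k ∈ Finset.range e, -(chebOn a σ (k + 1)) * f (k + 1))
        + -(chebOn a σ (e + 1)) * (-(f (e + 3)) + f (e + 1))
        + -(chebOn a σ (e + 2)) * (f (e + 2) + 2 * σ / a * f (e + 3)))
      = f 0 := by
  rw [Finset.sum_range_succ, Finset.sum_range_succ, Finset.sum_range_succ,
    Finset.sum_range_succ' (fun ℓ => chebOn a σ ℓ * f ℓ) e]
  have hrec : chebOn a σ (e + 3) = 2 * (σ / a) * chebOn a σ (e + 2) - chebOn a σ (e + 1) := by
    rw [show e + 3 = e + 1 + 2 by omega, chebOn_add_two, show e + 1 + 1 = e + 2 by omega]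
  have hneg : (∑ k ∈ Finset.range e, -(chebOn a σ (k + 1)) * f (k + 1))
      = -∑ k ∈ Finset.range e, chebOn a σ (k + 1) * f (k + 1) := by
    rw [← Finset.sum_neg_distrib]
    exact Finset.sum_congr rfl fun k _ => by ring
  rw [hrec, hneg, show chebOn a σ 0 = 1 from rfl]
  ring

set_option maxHeartbeats 1600000 in
/-- The block LU factorization `L_σ U_σ = (K − σM) Π` of the column-permuted companion
linearization matrix. -/
theorem companion_block_LU {n : ℕ} (a σ : ℝ) (ha : 0 < a) (d : ℕ) (hd : 3 ≤ d)
    (P : ℕ → Matrix (Fin n) (Fin n) ℝ) :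
    lowerLsigma a σ d n P * upperUsigma a σ d n =
      companionKmuM a σ d n P * blockCyclicPerm d n := by
  obtain ⟨e, rfl⟩ : ∃ e, d = e + 3 := ⟨d - 3, by omega⟩
  have h31 : e + 3 - 1 = e + 2 := by omega
  have h32 : e + 3 - 2 = e + 1 := by omega
  have h33 : e + 3 - 3 = e := by omega
  ext p q
  rw [Matrix.mul_apply, Matrix.mul_apply]
  obtain ⟨qs, hqsv⟩ : ∃ t : Fin (e + 3), (t : ℕ) = ((q.1 : ℕ) + 1) % (e + 3) :=
    ⟨⟨((q.1 : ℕ) + 1) % (e + 3), Nat.mod_lt _ (by omega)⟩, rfl⟩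
  -- collapse the permutation on the RHS
  have hmod1 : ∀ x : ℕ, x < e + 3 → ((x + 1) % (e + 3) + (e + 2)) % (e + 3) = x := by
    intro x hx
    rcases Nat.lt_or_ge (x + 1) (e + 3) with h | h
    · rw [Nat.mod_eq_of_lt h]
      have : x + 1 + (e + 2) = x + (e + 3) := by omega
      rw [this, Nat.add_mod_right, Nat.mod_eq_of_lt hx]
    · have hx' : x = e + 2 := by omega
      subst hx'
      have : e + 2 + 1 = e + 3 := by omega
      rw [this, Nat.mod_self, Nat.zero_add, Nat.mod_eq_of_lt (by omega)]
  have hmod2 : ∀ x : ℕ, x < e + 3 → (((x + (e + 2)) % (e + 3)) + 1) % (e + 3) = x := by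
    intro x hx
    rcases Nat.eq_zero_or_pos x with h | h
    · subst h
      have h1 : (0 + (e + 2)) % (e + 3) = e + 2 := by
        rw [Nat.zero_add]
        exact Nat.mod_eq_of_lt (by omega)
      rw [h1, show e + 2 + 1 = e + 3 by omega, Nat.mod_self]
    · have h1 : (x + (e + 2)) % (e + 3) = x - 1 := by
        rw [show x + (e + 2) = (x - 1) + (e + 3) by omega, Nat.add_mod_right]
        exact Nat.mod_eq_of_lt (by omega)
      rw [h1, show x - 1 + 1 = x by omega]
      exact Nat.mod_eq_of_lt hx
  have hPi : ∀ r : Fin (e + 3) × Fin n,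
      blockCyclicPerm (e + 3) n r q = if r = (qs, q.2) then 1 else 0 := by
    intro r
    unfold blockCyclicPerm
    by_cases hc : r = (qs, q.2)
    · subst hc
      have hv : (q.1 : ℕ) = ((qs : ℕ) + (e + 3 - 1)) % (e + 3) := by
        rw [h31, hqsv, hmod1 _ q.1.isLt]
      rw [if_pos ⟨hv, rfl⟩, if_pos rfl]
    · rw [if_neg, if_neg hc]
      rintro ⟨h1, h2⟩
      apply hc
      have hv : (r.1 : ℕ) = (qs : ℕ) := by
        rw [h31] at h1
        rw [hqsv, h1, hmod2 _ r.1.isLt]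
      exact Prod.ext (Fin.ext hv) h2
  have hRHS : (∑ r : Fin (e + 3) × Fin n, companionKmuM a σ (e + 3) n P p r * blockCyclicPerm (e + 3) n r q)
      = companionKmuM a σ (e + 3) n P p (qs, q.2) := by
    simp only [hPi, mul_ite, mul_one, mul_zero, Finset.sum_ite_eq', Finset.mem_univ, if_true]
  rw [hRHS]
  have hU : ∀ r : Fin (e + 3) × Fin n, upperUsigma a σ (e + 3) n r q
      = (if r = q then 1 else 0)
        + (if (q.1 : ℕ) = e + 2 ∧ (r.1 : ℕ) < e + 2 ∧ r.2 = q.2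
            then -(chebOn a σ ((r.1 : ℕ) + 1)) else 0) := by
    intro r
    unfold upperUsigma
    rw [h31]
    congr 2
    rw [eq_iff_iff, ← Prod.ext_iff]
  have hsplit : ∑ r : Fin (e + 3) × Fin n,
        lowerLsigma a σ (e + 3) n P p r * upperUsigma a σ (e + 3) n r q
      = lowerLsigma a σ (e + 3) n P p q
        + ∑ r : Fin (e + 3) × Fin n, lowerLsigma a σ (e + 3) n P p r *
            (if (q.1 : ℕ) = e + 2 ∧ (r.1 : ℕ) < e + 2 ∧ r.2 = q.2
              then -(chebOn a σ ((r.1 : ℕ) + 1)) else 0) := by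
    simp only [hU, mul_add, Finset.sum_add_distrib]
    congr 1
    simp only [mul_ite, mul_one, mul_zero, Finset.sum_ite_eq', Finset.mem_univ, if_true]
  rw [hsplit]
  by_cases hq : (q.1 : ℕ) = e + 2
  · -- last block column
    have hqs0 : (qs : ℕ) = 0 := by
      rw [hqsv, hq, show e + 2 + 1 = e + 3 by omega, Nat.mod_self]
    have hpl := p.1.isLt
    have hS : (∑ r : Fin (e + 3) × Fin n, lowerLsigma a σ (e + 3) n P p r *
            (if (q.1 : ℕ) = e + 2 ∧ (r.1 : ℕ) < e + 2 ∧ r.2 = q.2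
              then -(chebOn a σ ((r.1 : ℕ) + 1)) else 0))
        = ∑ i : Fin (e + 3), (if (i : ℕ) < e + 2 then -(chebOn a σ ((i : ℕ) + 1)) else 0)
            * lowerLsigma a σ (e + 3) n P p (i, q.2) := by
      rw [Fintype.sum_prod_type]
      refine Finset.sum_congr rfl fun i _ => ?_
      have hB : ∀ j : Fin n,
          (if (q.1 : ℕ) = e + 2 ∧ ((i, j).1.1 : ℕ) < e + 2 ∧ (i, j).2 = q.2
            then -(chebOn a σ (((i, j).1.1 : ℕ) + 1)) else 0)
          = (if (i : ℕ) < e + 2 then -(chebOn a σ ((i : ℕ) + 1)) else 0)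
            * (if j = q.2 then 1 else 0) := by
        intro j
        split_ifs <;> simp_all
      simp only [hB, ← mul_assoc, mul_ite, mul_one, mul_zero, Finset.sum_ite_eq',
        Finset.mem_univ, if_true]
      split_ifs <;> ring
    rw [hS]
    by_cases hp : (p.1 : ℕ) = e + 2
    · -- last block row
      have hrow : ∀ i : Fin (e + 3), lowerLsigma a σ (e + 3) n P p (i, q.2)
          = (if (i : ℕ) + 4 ≤ e + 3 then P ((i : ℕ) + 1) p.2 q.2
             else if (i : ℕ) = e then (-(P (e + 3)) + P (e + 1)) p.2 q.2
             else if (i : ℕ) = e + 1 then (P (e + 2) + (2 * σ / a) • P (e + 3)) p.2 q.2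
             else (∑ ℓ ∈ Finset.range (e + 3 + 1), chebOn a σ ℓ • P ℓ) p.2 q.2) := by
        intro i
        simp only [lowerLsigma, h31, h32, h33, hp, eq_self_iff_true, if_true]
      have h1 : (∑ i : Fin (e + 3), (if (i : ℕ) < e + 2 then -(chebOn a σ ((i : ℕ) + 1)) else 0)
            * lowerLsigma a σ (e + 3) n P p (i, q.2))
          = ∑ k ∈ Finset.range (e + 3), (if k < e + 2 then -(chebOn a σ (k + 1)) else 0)
              * (if k + 4 ≤ e + 3 then P (k + 1) p.2 q.2
                 else if k = e then (-(P (e + 3)) + P (e + 1)) p.2 q.2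
                 else if k = e + 1 then (P (e + 2) + (2 * σ / a) • P (e + 3)) p.2 q.2
                 else (∑ ℓ ∈ Finset.range (e + 3 + 1), chebOn a σ ℓ • P ℓ) p.2 q.2) := by
        rw [← Fin.sum_univ_eq_sum_range (fun k => (if k < e + 2 then -(chebOn a σ (k + 1)) else 0)
              * (if k + 4 ≤ e + 3 then P (k + 1) p.2 q.2
                 else if k = e then (-(P (e + 3)) + P (e + 1)) p.2 q.2
                 else if k = e + 1 then (P (e + 2) + (2 * σ / a) • P (e + 3)) p.2 q.2
                 else (∑ ℓ ∈ Finset.range (e + 3 + 1), chebOn a σ ℓ • P ℓ) p.2 q.2)) (e + 3)]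
        exact Finset.sum_congr rfl fun i _ => by rw [hrow i]
      rw [h1, Finset.sum_range_succ, Finset.sum_range_succ, Finset.sum_range_succ,
        if_neg (by omega : ¬ (e + 2 < e + 2)), zero_mul, add_zero,
        if_pos (by omega : e + 1 < e + 2), if_pos (by omega : e < e + 2),
        if_neg (by omega : ¬ (e + 1 + 4 ≤ e + 3)), if_neg (by omega : ¬ (e + 1 = e)),
        if_pos (rfl : e + 1 = e + 1),
        if_neg (by omega : ¬ (e + 4 ≤ e + 3)), if_pos (rfl : e = e),
        show e + 1 + 1 = e + 2 by omega]
      have h2 : ∑ k ∈ Finset.range e, (if k < e + 2 then -(chebOn a σ (k + 1)) else 0)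
            * (if k + 4 ≤ e + 3 then P (k + 1) p.2 q.2
               else if k = e then (-(P (e + 3)) + P (e + 1)) p.2 q.2
               else if k = e + 1 then (P (e + 2) + (2 * σ / a) • P (e + 3)) p.2 q.2
               else (∑ ℓ ∈ Finset.range (e + 3 + 1), chebOn a σ ℓ • P ℓ) p.2 q.2)
          = ∑ k ∈ Finset.range e, -(chebOn a σ (k + 1)) * P (k + 1) p.2 q.2 := by
        refine Finset.sum_congr rfl fun k hk => ?_
        rw [Finset.mem_range] at hk
        rw [if_pos (by omega), if_pos (by omega)]
      rw [h2]
      have hLv : lowerLsigma a σ (e + 3) n P p q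
          = (∑ ℓ ∈ Finset.range (e + 3 + 1), chebOn a σ ℓ • P ℓ) p.2 q.2 := by
        simp only [lowerLsigma]
        rw [if_pos (by omega), if_neg (by omega), if_neg (by omega), if_neg (by omega)]
      have hKv : companionKmuM a σ (e + 3) n P p (qs, q.2) = P 0 p.2 q.2 := by
        simp only [companionKmuM]
        rw [if_pos (show (p.1 : ℕ) = e + 3 - 1 by omega),
          if_pos (show (qs : ℕ) + 3 ≤ e + 3 by omega), hqs0]
      rw [hLv, hKv]
      simp only [Matrix.sum_apply, Matrix.smul_apply, Matrix.add_apply, Matrix.neg_apply,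
        smul_eq_mul]
      exact cheb_sum_identity a σ e (fun ℓ => P ℓ p.2 q.2)
    · have hL0 : lowerLsigma a σ (e + 3) n P p q = 0 := by
        simp only [lowerLsigma]
        rw [if_neg (by omega), if_neg (by omega), if_neg (by omega), if_neg (by omega)]
      by_cases hp0 : (p.1 : ℕ) = 0
      · -- first block row
        have hrow : ∀ i : Fin (e + 3), lowerLsigma a σ (e + 3) n P p (i, q.2)
            = (if (i : ℕ) = 0 then (if p.2 = q.2 then (1:ℝ) else 0) else 0) := by
          intro i
          simp only [lowerLsigma, hp0]
          split_ifs <;> first | rfl | omega | exact ‹False›.elim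
        have h1 : (∑ i : Fin (e + 3), (if (i : ℕ) < e + 2 then -(chebOn a σ ((i : ℕ) + 1)) else 0)
              * lowerLsigma a σ (e + 3) n P p (i, q.2))
            = ∑ k ∈ Finset.range (e + 3),
                (if k = 0 then -(chebOn a σ 1) * (if p.2 = q.2 then (1:ℝ) else 0) else 0) := by
          rw [← Fin.sum_univ_eq_sum_range
            (fun k => if k = 0 then -(chebOn a σ 1) * (if p.2 = q.2 then (1:ℝ) else 0) else 0) (e + 3)]
          refine Finset.sum_congr rfl fun i _ => ?_
          rw [hrow i]
          rcases eq_or_ne (i : ℕ) 0 with h | h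
          · rw [h, if_pos (show (0:ℕ) < e + 2 by omega), if_pos (rfl : (0:ℕ) = 0),
              if_pos (rfl : (0:ℕ) = 0)]
          · rw [if_neg h, mul_zero, if_neg h]
        rw [h1, Finset.sum_ite_eq' (Finset.range (e + 3)) 0
            (fun _ => -(chebOn a σ 1) * (if p.2 = q.2 then (1:ℝ) else 0)),
          if_pos (Finset.mem_range.mpr (show (0:ℕ) < e + 3 by omega))]
        have hKv : companionKmuM a σ (e + 3) n P p (qs, q.2)
            = -(σ / a) * (if p.2 = q.2 then (1:ℝ) else 0) := by
          simp only [companionKmuM]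
          rw [if_neg (show ¬ ((p.1 : ℕ) = e + 3 - 1) by omega), if_pos hp0, if_pos hqs0]
        rw [hL0, hKv, show chebOn a σ 1 = σ / a from rfl]
        ring
      · -- middle block rows
        have hrow : ∀ i : Fin (e + 3), lowerLsigma a σ (e + 3) n P p (i, q.2)
            = (if (i : ℕ) = (p.1 : ℕ) then (if p.2 = q.2 then (1:ℝ) else 0)
               else if (i : ℕ) + 1 = (p.1 : ℕ) then -(2 * σ / a) * (if p.2 = q.2 then (1:ℝ) else 0)
               else if (i : ℕ) + 2 = (p.1 : ℕ) then (if p.2 = q.2 then (1:ℝ) else 0) else 0) := by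
          intro i
          simp only [lowerLsigma]
          rw [if_neg (by omega)]
        by_cases hp1 : (p.1 : ℕ) = 1
        · have h1 : (∑ i : Fin (e + 3), (if (i : ℕ) < e + 2 then -(chebOn a σ ((i : ℕ) + 1)) else 0)
                * lowerLsigma a σ (e + 3) n P p (i, q.2))
              = ∑ k ∈ Finset.range (e + 3),
                  ((if k = 1 then -(chebOn a σ 2) * (if p.2 = q.2 then (1:ℝ) else 0) else 0)
                    + (if k = 0 then -(chebOn a σ 1) * (-(2 * σ / a) * (if p.2 = q.2 then (1:ℝ) else 0)) else 0)) := by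
            rw [← Fin.sum_univ_eq_sum_range
              (fun k => (if k = 1 then -(chebOn a σ 2) * (if p.2 = q.2 then (1:ℝ) else 0) else 0)
                + (if k = 0 then -(chebOn a σ 1) * (-(2 * σ / a) * (if p.2 = q.2 then (1:ℝ) else 0)) else 0)) (e + 3)]
            refine Finset.sum_congr rfl fun i _ => ?_
            rw [hrow i, hp1]
            rcases eq_or_ne (i : ℕ) 1 with h | h
            · rw [h, if_pos (show (1:ℕ) < e + 2 by omega), if_pos (rfl : (1:ℕ) = 1),
                if_pos (rfl : (1:ℕ) = 1), if_neg (show ¬ ((1:ℕ) = 0) by omega)]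
              norm_num
            · rcases eq_or_ne (i : ℕ) 0 with h0 | h0
              · rw [h0, if_pos (show (0:ℕ) < e + 2 by omega),
                  if_neg (show ¬ ((0:ℕ) = 1) by omega),
                  if_pos (show (0:ℕ) + 1 = 1 by omega),
                  if_neg (show ¬ ((0:ℕ) = 1) by omega), if_pos (rfl : (0:ℕ) = 0)]
                norm_num
              · rw [if_neg h, if_neg (show ¬ ((i : ℕ) + 1 = 1) by omega),
                  if_neg (show ¬ ((i : ℕ) + 2 = 1) by omega), mul_zero,
                  if_neg h, if_neg h0]
                norm_num
          rw [h1, Finset.sum_add_distrib,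
            Finset.sum_ite_eq' (Finset.range (e + 3)) 1 (fun _ => -(chebOn a σ 2) * (if p.2 = q.2 then (1:ℝ) else 0)),
            Finset.sum_ite_eq' (Finset.range (e + 3)) 0
              (fun _ => -(chebOn a σ 1) * (-(2 * σ / a) * (if p.2 = q.2 then (1:ℝ) else 0))),
            if_pos (Finset.mem_range.mpr (show (1:ℕ) < e + 3 by omega)),
            if_pos (Finset.mem_range.mpr (show (0:ℕ) < e + 3 by omega))]
          have hKv : companionKmuM a σ (e + 3) n P p (qs, q.2) = (if p.2 = q.2 then (1:ℝ) else 0) := by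
            simp only [companionKmuM]
            rw [if_neg (show ¬ ((p.1 : ℕ) = e + 3 - 1) by omega), if_neg hp0,
              if_pos (show (qs : ℕ) + 1 = (p.1 : ℕ) by omega)]
          rw [hL0, hKv, show chebOn a σ 2 = 2 * (σ / a) * (σ / a) - 1 from rfl,
            show chebOn a σ 1 = σ / a from rfl]
          ring
        · obtain ⟨m, hm⟩ : ∃ m, (p.1 : ℕ) = m + 2 := ⟨(p.1 : ℕ) - 2, by omega⟩
          have h1 : (∑ i : Fin (e + 3), (if (i : ℕ) < e + 2 then -(chebOn a σ ((i : ℕ) + 1)) else 0)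
                * lowerLsigma a σ (e + 3) n P p (i, q.2))
              = ∑ k ∈ Finset.range (e + 3),
                  ((if k = m + 2 then -(chebOn a σ (m + 3)) * (if p.2 = q.2 then (1:ℝ) else 0) else 0)
                    + (if k = m + 1 then -(chebOn a σ (m + 2)) * (-(2 * σ / a) * (if p.2 = q.2 then (1:ℝ) else 0)) else 0)
                    + (if k = m then -(chebOn a σ (m + 1)) * (if p.2 = q.2 then (1:ℝ) else 0) else 0)) := by
            rw [← Fin.sum_univ_eq_sum_range
              (fun k => (if k = m + 2 then -(chebOn a σ (m + 3)) * (if p.2 = q.2 then (1:ℝ) else 0) else 0)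
                + (if k = m + 1 then -(chebOn a σ (m + 2)) * (-(2 * σ / a) * (if p.2 = q.2 then (1:ℝ) else 0)) else 0)
                + (if k = m then -(chebOn a σ (m + 1)) * (if p.2 = q.2 then (1:ℝ) else 0) else 0)) (e + 3)]
            refine Finset.sum_congr rfl fun i _ => ?_
            rw [hrow i, hm]
            rcases eq_or_ne (i : ℕ) (m + 2) with h | h
            · rw [h, if_pos (show m + 2 < e + 2 by omega), if_pos (rfl : m + 2 = m + 2),
                if_pos (rfl : m + 2 = m + 2), if_neg (show ¬ (m + 2 = m + 1) by omega),
                if_neg (show ¬ (m + 2 = m) by omega), show m + 2 + 1 = m + 3 by omega]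
              ring
            · rcases eq_or_ne (i : ℕ) (m + 1) with h' | h'
              · rw [h', if_pos (show m + 1 < e + 2 by omega),
                  if_neg (show ¬ (m + 1 = m + 2) by omega),
                  if_pos (show m + 1 + 1 = m + 2 by omega),
                  if_neg (show ¬ (m + 1 = m + 2) by omega),
                  if_pos (rfl : m + 1 = m + 1), if_neg (show ¬ (m + 1 = m) by omega),
                  show m + 1 + 1 = m + 2 by omega]
                ring
              · rcases eq_or_ne (i : ℕ) m with h'' | h''
                · rw [h'', if_pos (show m < e + 2 by omega),
                    if_neg (show ¬ (m = m + 2) by omega),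
                    if_neg (show ¬ (m + 1 = m + 2) by omega),
                    if_pos (show m + 2 = m + 2 from rfl),
                    if_neg (show ¬ (m = m + 2) by omega),
                    if_neg (show ¬ (m = m + 1) by omega), if_pos (rfl : m = m)]
                  ring
                · rw [if_neg h, if_neg (show ¬ ((i : ℕ) + 1 = m + 2) by omega),
                    if_neg (show ¬ ((i : ℕ) + 2 = m + 2) by omega), mul_zero,
                    if_neg h, if_neg h', if_neg h'']
                  norm_num
          rw [h1, Finset.sum_add_distrib, Finset.sum_add_distrib,
            Finset.sum_ite_eq' (Finset.range (e + 3)) (m + 2)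
              (fun _ => -(chebOn a σ (m + 3)) * (if p.2 = q.2 then (1:ℝ) else 0)),
            Finset.sum_ite_eq' (Finset.range (e + 3)) (m + 1)
              (fun _ => -(chebOn a σ (m + 2)) * (-(2 * σ / a) * (if p.2 = q.2 then (1:ℝ) else 0))),
            Finset.sum_ite_eq' (Finset.range (e + 3)) m
              (fun _ => -(chebOn a σ (m + 1)) * (if p.2 = q.2 then (1:ℝ) else 0)),
            if_pos (Finset.mem_range.mpr (show m + 2 < e + 3 by omega)),
            if_pos (Finset.mem_range.mpr (show m + 1 < e + 3 by omega)),
            if_pos (Finset.mem_range.mpr (show m < e + 3 by omega))]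
          have hKv : companionKmuM a σ (e + 3) n P p (qs, q.2) = 0 := by
            simp only [companionKmuM]
            rw [if_neg (show ¬ ((p.1 : ℕ) = e + 3 - 1) by omega), if_neg hp0,
              if_neg (show ¬ ((qs : ℕ) + 1 = (p.1 : ℕ)) by omega),
              if_neg (show ¬ ((qs : ℕ) = (p.1 : ℕ)) by omega),
              if_neg (show ¬ ((qs : ℕ) = (p.1 : ℕ) + 1) by omega)]
          rw [hL0, hKv, show m + 3 = m + 1 + 2 by omega, chebOn_add_two,
            show m + 1 + 1 = m + 2 by omega]
          ring
  · have hql : (q.1 : ℕ) < e + 2 := by have := q.1.isLt; omega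
    have hqsv1 : (qs : ℕ) = (q.1 : ℕ) + 1 := by
      rw [hqsv]; exact Nat.mod_eq_of_lt (by omega)
    have hz : ∑ r : Fin (e + 3) × Fin n, lowerLsigma a σ (e + 3) n P p r *
            (if (q.1 : ℕ) = e + 2 ∧ (r.1 : ℕ) < e + 2 ∧ r.2 = q.2
              then -(chebOn a σ ((r.1 : ℕ) + 1)) else 0) = 0 := by
      apply Finset.sum_eq_zero
      intro r _
      rw [if_neg (by tauto), mul_zero]
    rw [hz, add_zero]
    simp only [lowerLsigma, companionKmuM, hqsv1, h31, h32, h33]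
    split_ifs <;> first | rfl | omega | exact ‹False›.elim
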